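/- Unique solvability and discrete maximum principle for the finite-volume v-step: suppose u_j^{n+1} ≥ 0 for all 1 ≤ j ≤ J. Then the linear system requiring that, for every 1 ≤ j ≤ J, |K_j| (v_j^{n+1} − v_j^n)/Δt − (δₓv^{n+1}_{j+1/2} − δₓv^{n+1}_{j−1/2}) + μ u_j^{n+1} v_j^{n+1} = 0, has exactly one solution v^{n+1} ∈ ℝ^J. Moreover: (i) if v_j^n > 0 for all j then v_j^{n+1} > 0 for all j; (ii) if M ≥ 0 and v_j^n ≤ M for all j, then v_j^{n+1} ≤ M for all j. -/
import Mathlib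


/-- Control-volume size: `|K_1| = |K_J| = h/2` and `|K_j| = h` for interior `j`. -/
noncomputable def Kvol (J : ℕ) (h : ℝ) (j : ℕ) : ℝ :=
  if j = 1 ∨ j = J then h/2 else h

/-- Half-point difference `δₓw_{j+1/2} = (w_{j+1} − w_j)/h` for `1 ≤ j ≤ J−1`,
with the zero-flux conventions `δₓw_{1/2} = δₓw_{J+1/2} = 0`. -/
noncomputable def dhalf (J : ℕ) (h : ℝ) (w : ℕ → ℝ) (j : ℕ) : ℝ :=
  if 1 ≤ j ∧ j ≤ J - 1 then (w (j+1) - w j)/h else 0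

/-- Extension of a vector `w ∈ ℝ^J` (indexed by `Fin J`) to indices
`j = 1, …, J`, with the fictitious values outside taken to be `0`. -/
def extJ (J : ℕ) (w : Fin J → ℝ) (j : ℕ) : ℝ :=
  if hj : 1 ≤ j ∧ j ≤ J then w ⟨j - 1, by omega⟩ else 0

/-- The finite-volume v-step scheme, for a candidate solution `w = v^{n+1}`. -/
def schemeV (J : ℕ) (h Δt μ : ℝ) (u1 vn w : ℕ → ℝ) : Prop :=
  ∀ j : ℕ, 1 ≤ j → j ≤ J →
    Kvol J h j * (w j - vn j) / Δt
      - (dhalf J h w j - dhalf J h w (j-1))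
      + μ * u1 j * w j = 0

/- ---------- auxiliary lemmas ---------- -/

lemma Kvol_pos (J : ℕ) {h : ℝ} (hh : 0 < h) (j : ℕ) : 0 < Kvol J h j := by
  unfold Kvol; split <;> linarith

lemma dhalf_neg (J : ℕ) (h : ℝ) (f : ℕ → ℝ) (j : ℕ) :
    dhalf J h (fun k => -(f k)) j = - dhalf J h f j := by
  unfold dhalf; split_ifs with h1
  · ring
  · simp

lemma dhalf_add (J : ℕ) (h : ℝ) (a b : ℕ → ℝ) (j : ℕ) :
    dhalf J h (fun k => a k + b k) j = dhalf J h a j + dhalf J h b j := by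
  unfold dhalf; split_ifs with h1
  · ring
  · simp

lemma dhalf_smul (J : ℕ) (h : ℝ) (c : ℝ) (a : ℕ → ℝ) (j : ℕ) :
    dhalf J h (fun k => c * a k) j = c * dhalf J h a j := by
  unfold dhalf; split_ifs with h1
  · ring
  · simp

lemma extJ_add (J : ℕ) (w w' : Fin J → ℝ) :
    extJ J (w + w') = fun k => extJ J w k + extJ J w' k := by
  funext j; unfold extJ; split_ifs with hj <;> simp

lemma extJ_smul (J : ℕ) (c : ℝ) (w : Fin J → ℝ) :
    extJ J (c • w) = fun k => c * extJ J w k := by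
  funext j; unfold extJ; split_ifs with hj <;> simp

lemma extJ_succ (J : ℕ) (w : Fin J → ℝ) (i : Fin J) :
    extJ J w ((i : ℕ) + 1) = w i := by
  have hi := i.isLt
  unfold extJ
  rw [dif_pos ⟨by omega, by omega⟩]
  exact congrArg w (Fin.ext (by simp))

/-- Discrete maximum principle (upper bound). -/
lemma scheme_upper (J : ℕ) (hJ : 3 ≤ J) {h Δt μ : ℝ} (hh : 0 < h) (hΔt : 0 < Δt)
    (hμ : 0 < μ) (u1 g f : ℕ → ℝ) (hu1 : ∀ j : ℕ, 1 ≤ j → j ≤ J → 0 ≤ u1 j)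
    (hs : schemeV J h Δt μ u1 g f) {M : ℝ} (hM : 0 ≤ M)
    (hg : ∀ j : ℕ, 1 ≤ j → j ≤ J → g j ≤ M) :
    ∀ j : ℕ, 1 ≤ j → j ≤ J → f j ≤ M := by
  obtain ⟨j0, hmem, hmax⟩ := (Finset.Icc 1 J).exists_max_image f
    ⟨1, Finset.mem_Icc.mpr ⟨le_refl 1, by omega⟩⟩
  rw [Finset.mem_Icc] at hmem
  have key : f j0 ≤ M := by
    by_contra hc
    push_neg at hc
    have heq := hs j0 hmem.1 hmem.2
    have hK := Kvol_pos J hh j0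
    have hA : 0 < Kvol J h j0 * (f j0 - g j0) / Δt := by
      have := hg j0 hmem.1 hmem.2
      have : 0 < f j0 - g j0 := by linarith
      positivity
    have hB : dhalf J h f j0 ≤ 0 := by
      unfold dhalf; split_ifs with h1
      · have hle : f (j0 + 1) ≤ f j0 :=
          hmax _ (Finset.mem_Icc.mpr ⟨by omega, by omega⟩)
        apply div_nonpos_of_nonpos_of_nonneg (by linarith) hh.le
      · exact le_refl 0
    have hC : 0 ≤ dhalf J h f (j0 - 1) := by
      unfold dhalf; split_ifs with h1
      · have hj : j0 - 1 + 1 = j0 := by omega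
        rw [hj]
        have hle : f (j0 - 1) ≤ f j0 :=
          hmax _ (Finset.mem_Icc.mpr ⟨h1.1, by omega⟩)
        exact div_nonneg (by linarith) hh.le
      · exact le_refl 0
    have hD : 0 ≤ μ * u1 j0 * f j0 := by
      have := hu1 j0 hmem.1 hmem.2
      have : 0 ≤ f j0 := by linarith
      positivity
    linarith
  intro j h1 h2
  exact le_trans (hmax j (Finset.mem_Icc.mpr ⟨h1, h2⟩)) key

/-- Discrete minimum principle (strict positivity). -/
lemma scheme_pos (J : ℕ) (hJ : 3 ≤ J) {h Δt μ : ℝ} (hh : 0 < h) (hΔt : 0 < Δt)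
    (hμ : 0 < μ) (u1 g f : ℕ → ℝ) (hu1 : ∀ j : ℕ, 1 ≤ j → j ≤ J → 0 ≤ u1 j)
    (hs : schemeV J h Δt μ u1 g f)
    (hg : ∀ j : ℕ, 1 ≤ j → j ≤ J → 0 < g j) :
    ∀ j : ℕ, 1 ≤ j → j ≤ J → 0 < f j := by
  obtain ⟨j0, hmem, hmin⟩ := (Finset.Icc 1 J).exists_min_image f
    ⟨1, Finset.mem_Icc.mpr ⟨le_refl 1, by omega⟩⟩
  rw [Finset.mem_Icc] at hmem
  have key : 0 < f j0 := by
    by_contra hc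
    push_neg at hc
    have heq := hs j0 hmem.1 hmem.2
    have hK := Kvol_pos J hh j0
    have hA : Kvol J h j0 * (f j0 - g j0) / Δt < 0 := by
      have := hg j0 hmem.1 hmem.2
      have hlt : f j0 - g j0 < 0 := by linarith
      exact div_neg_of_neg_of_pos (mul_neg_of_pos_of_neg hK hlt) hΔt
    have hB : 0 ≤ dhalf J h f j0 := by
      unfold dhalf; split_ifs with h1
      · have hle : f j0 ≤ f (j0 + 1) :=
          hmin _ (Finset.mem_Icc.mpr ⟨by omega, by omega⟩)
        exact div_nonneg (by linarith) hh.le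
      · exact le_refl 0
    have hC : dhalf J h f (j0 - 1) ≤ 0 := by
      unfold dhalf; split_ifs with h1
      · have hj : j0 - 1 + 1 = j0 := by omega
        rw [hj]
        have hle : f j0 ≤ f (j0 - 1) :=
          hmin _ (Finset.mem_Icc.mpr ⟨h1.1, by omega⟩)
        apply div_nonpos_of_nonpos_of_nonneg (by linarith) hh.le
      · exact le_refl 0
    have hD : μ * u1 j0 * f j0 ≤ 0 := by
      have h1 := hu1 j0 hmem.1 hmem.2
      have h2 : μ * u1 j0 * f j0 = -(μ * u1 j0 * (-(f j0))) := by ring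
      rw [h2]
      simp only [neg_nonpos]
      have : 0 ≤ -(f j0) := by linarith
      positivity
    linarith
  intro j h1 h2
  exact lt_of_lt_of_le key (hmin j (Finset.mem_Icc.mpr ⟨h1, h2⟩))

lemma scheme_neg (J : ℕ) {h Δt μ : ℝ} (u1 f : ℕ → ℝ)
    (hs : schemeV J h Δt μ u1 (fun _ => 0) f) :
    schemeV J h Δt μ u1 (fun _ => 0) (fun k => -(f k)) := by
  intro j h1 h2
  have heq := hs j h1 h2
  simp only [dhalf_neg]
  linear_combination -heq

/-- The linear map underlying the v-step scheme. -/
noncomputable def Tmap (J : ℕ) (h Δt μ : ℝ) (u1 : ℕ → ℝ) :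
    (Fin J → ℝ) →ₗ[ℝ] (Fin J → ℝ) where
  toFun w := fun i =>
    Kvol J h ((i : ℕ) + 1) * extJ J w ((i : ℕ) + 1) / Δt
      - (dhalf J h (extJ J w) ((i : ℕ) + 1) - dhalf J h (extJ J w) (i : ℕ))
      + μ * u1 ((i : ℕ) + 1) * extJ J w ((i : ℕ) + 1)
  map_add' w w' := by
    funext i
    simp only [extJ_add, dhalf_add, Pi.add_apply]
    ring
  map_smul' c w := by
    funext i
    simp only [extJ_smul, dhalf_smul, Pi.smul_apply, smul_eq_mul, RingHom.id_apply]
    ring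

lemma schemeV_iff_Tmap (J : ℕ) (hJ : 3 ≤ J) {h Δt μ : ℝ} (hΔt : 0 < Δt)
    (u1 vn : ℕ → ℝ) (w : Fin J → ℝ) :
    schemeV J h Δt μ u1 vn (extJ J w) ↔
      Tmap J h Δt μ u1 w = fun i : Fin J => Kvol J h ((i : ℕ) + 1) * vn ((i : ℕ) + 1) / Δt := by
  constructor
  · intro hs
    funext i
    have hi := i.isLt
    have heq := hs ((i : ℕ) + 1) (by omega) (by omega)
    simp only [Nat.add_sub_cancel] at heq
    show Kvol J h ((i : ℕ) + 1) * extJ J w ((i : ℕ) + 1) / Δt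
      - (dhalf J h (extJ J w) ((i : ℕ) + 1) - dhalf J h (extJ J w) (i : ℕ))
      + μ * u1 ((i : ℕ) + 1) * extJ J w ((i : ℕ) + 1)
      = Kvol J h ((i : ℕ) + 1) * vn ((i : ℕ) + 1) / Δt
    linear_combination heq
  · intro hT j h1 h2
    have heq := congrFun hT ⟨j - 1, by omega⟩
    simp only [Tmap, LinearMap.coe_mk, AddHom.coe_mk] at heq
    have hj : (j - 1) + 1 = j := by omega
    rw [hj] at heq
    linear_combination heq

lemma Tmap_injective (J : ℕ) (hJ : 3 ≤ J) {h Δt μ : ℝ} (hh : 0 < h) (hΔt : 0 < Δt)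
    (hμ : 0 < μ) (u1 : ℕ → ℝ) (hu1 : ∀ j : ℕ, 1 ≤ j → j ≤ J → 0 ≤ u1 j) :
    Function.Injective (Tmap J h Δt μ u1) := by
  rw [← LinearMap.ker_eq_bot, LinearMap.ker_eq_bot']
  intro w hw
  have hs : schemeV J h Δt μ u1 (fun _ => 0) (extJ J w) := by
    rw [schemeV_iff_Tmap J hJ hΔt]
    rw [hw]
    funext i
    simp
  have hle : ∀ j : ℕ, 1 ≤ j → j ≤ J → extJ J w j ≤ 0 :=
    scheme_upper J hJ hh hΔt hμ u1 (fun _ => 0) (extJ J w) hu1 hs le_rfl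
      (fun j _ _ => le_rfl)
  have hge : ∀ j : ℕ, 1 ≤ j → j ≤ J → (fun k => -(extJ J w k)) j ≤ 0 :=
    scheme_upper J hJ hh hΔt hμ u1 (fun _ => 0) _ hu1
      (scheme_neg J u1 (extJ J w) hs) le_rfl (fun j _ _ => le_rfl)
  funext i
  have hi := i.isLt
  have h1 := hle ((i : ℕ) + 1) (by omega) (by omega)
  have h2 := hge ((i : ℕ) + 1) (by omega) (by omega)
  rw [extJ_succ] at h1
  simp only [extJ_succ] at h2
  simp only [Pi.zero_apply]
  linarith

/-- Unique solvability and discrete maximum principle for the finite-volume v-step: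
given `u^{n+1} ≥ 0`, the scheme has exactly one solution `v^{n+1} ∈ ℝ^J`; moreover,
(i) strict positivity of `v^n` is preserved, and (ii) any upper bound `M ≥ 0` on
`v^n` is preserved. -/
theorem fv_vstep_unique_maxprinciple
    (J : ℕ) (hJ : 3 ≤ J) (h Δt μ : ℝ) (hh : 0 < h) (hΔt : 0 < Δt) (hμ : 0 < μ)
    (u1 vn : ℕ → ℝ)
    (hu1 : ∀ j : ℕ, 1 ≤ j → j ≤ J → 0 ≤ u1 j) :
    (∃! w : Fin J → ℝ, schemeV J h Δt μ u1 vn (extJ J w)) ∧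
    (∀ w : Fin J → ℝ, schemeV J h Δt μ u1 vn (extJ J w) →
      (∀ j : ℕ, 1 ≤ j → j ≤ J → 0 < vn j) → ∀ i : Fin J, 0 < w i) ∧
    (∀ M : ℝ, 0 ≤ M → ∀ w : Fin J → ℝ, schemeV J h Δt μ u1 vn (extJ J w) →
      (∀ j : ℕ, 1 ≤ j → j ≤ J → vn j ≤ M) → ∀ i : Fin J, w i ≤ M) := by
  have hinj := Tmap_injective J hJ hh hΔt hμ u1 hu1
  refine ⟨?_, ?_, ?_⟩
  · have hsurj : Function.Surjective (Tmap J h Δt μ u1) :=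
      (LinearMap.injective_iff_surjective).mp hinj
    obtain ⟨w, hw⟩ := hsurj (fun i : Fin J => Kvol J h ((i : ℕ) + 1) * vn ((i : ℕ) + 1) / Δt)
    refine ⟨w, (schemeV_iff_Tmap J hJ hΔt u1 vn w).mpr hw, ?_⟩
    intro w' hw'
    exact hinj (((schemeV_iff_Tmap J hJ hΔt u1 vn w').mp hw').trans hw.symm)
  · intro w hs hvn i
    have := scheme_pos J hJ hh hΔt hμ u1 vn (extJ J w) hu1 hs hvn
      ((i : ℕ) + 1) (by omega) (by have := i.isLt; omega)
    rwa [extJ_succ] at this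
  · intro M hM w hs hvn i
    have := scheme_upper J hJ hh hΔt hμ u1 vn (extJ J w) hu1 hs hM hvn
      ((i : ℕ) + 1) (by omega) (by have := i.isLt; omega)
    rwa [extJ_succ] at this
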